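/- Let f be a continuously differentiable function from an open set U ⊆ R⁴ ≅ H to H whose differential at a point satisfies the quaternionic Cauchy–Riemann system ∂F/∂v = (∂F/∂w)·i⁻¹ = (∂F/∂x)·j⁻¹ = (∂F/∂y)·k⁻¹ (where the quaternion-valued partial derivatives are multiplied on the right by the inverses of i, j, k). If F is twice continuously differentiable, then each real component of F is harmonic in each of the variable pairs (v,w), (w,x), (x,y), and (v,y): e.g. ∂²F/∂v² + ∂²F/∂w² = 0. -/

import Mathlib

open Quaternion
open scoped Quaternion

noncomputable def qi : ℍ[ℝ] := ⟨0, 1, 0, 0⟩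
noncomputable def qj : ℍ[ℝ] := ⟨0, 0, 1, 0⟩
noncomputable def qk : ℍ[ℝ] := ⟨0, 0, 0, 1⟩

/-!
Writing `B` for the second derivative of `F` at `z`, differentiating the Cauchy–Riemann
equations `DF(a) = DF(1)·a` (`a = i, j, k`) gives `B(v, a) = B(v, 1)·a`. Together with the
symmetry of `B` this forces `B(u, w) = B(1, 1)·u·w` for `u, w ∈ {1, i, j, k}`, so
`B(1, 1)·ij = B(1, 1)·ji`, i.e. `2·B(1, 1)·k = 0`, whence `B(1, 1) = 0` and every pure second
derivative `B(a, a)` vanishes. The pairwise Laplacians are sums of these.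
-/

open Filter Topology

lemma qi_mul_qj : qi * qj = qk := by
  ext <;> simp [Quaternion.re_mul, Quaternion.imI_mul, Quaternion.imJ_mul, Quaternion.imK_mul] <;>
    simp [qi, qj, qk]

lemma qj_mul_qi : qj * qi = -qk := by
  ext <;> simp [Quaternion.re_mul, Quaternion.imI_mul, Quaternion.imJ_mul, Quaternion.imK_mul] <;>
    simp [qi, qj, qk]

lemma qi_ne_zero : qi ≠ 0 := fun h => by
  simpa [qi] using congrArg QuaternionAlgebra.imI h

lemma qj_ne_zero : qj ≠ 0 := fun h => by
  simpa [qj] using congrArg QuaternionAlgebra.imJ h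

lemma qk_ne_zero : qk ≠ 0 := fun h => by
  simpa [qk] using congrArg QuaternionAlgebra.imK h

section SecondDerivative

variable {𝕜 E G A : Type*} [NontriviallyNormedField 𝕜] [NormedAddCommGroup E] [NormedSpace 𝕜 E]
  [NormedAddCommGroup G] [NormedSpace 𝕜 G] [NormedRing A] [NormedAlgebra 𝕜 A]

lemma fderiv_fderiv_apply {f : E → G} {x : E} (hf : DifferentiableAt 𝕜 (fderiv 𝕜 f) x)
    (v w : E) : fderiv 𝕜 (fun y => fderiv 𝕜 f y v) x w = fderiv 𝕜 (fderiv 𝕜 f) x w v := by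
  simp [fderiv_clm_apply hf (differentiableAt_const v)]

lemma fderiv_fderiv_apply_eq_mul_const {f : E → A} {x : E}
    (hf : DifferentiableAt 𝕜 (fderiv 𝕜 f) x) {u e : E} {c : A}
    (h : (fun y => fderiv 𝕜 f y u) =ᶠ[𝓝 x] fun y => fderiv 𝕜 f y e * c) (w : E) :
    fderiv 𝕜 (fderiv 𝕜 f) x w u = fderiv 𝕜 (fderiv 𝕜 f) x w e * c := by
  rw [← fderiv_fderiv_apply hf, ← fderiv_fderiv_apply hf, h.fderiv_eq,
    fderiv_mul_const' (hf.clm_apply (differentiableAt_const e))]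
  simp

end SecondDerivative

lemma apply_eq_apply_one_one_mul_mul {R : Type*} [Ring R] {B : R → R → R}
    (hB : ∀ v w, B v w = B w v) {u w : R} (hu : ∀ v, B v u = B v 1 * u)
    (hw : ∀ v, B v w = B v 1 * w) : B u w = B 1 1 * u * w := by
  rw [hw, hB u 1, hu]

lemma apply_one_one_eq_zero_of_symm {B : ℍ[ℝ] → ℍ[ℝ] → ℍ[ℝ]} (hB : ∀ v w, B v w = B w v)
    (hi : ∀ v, B v qi = B v 1 * qi) (hj : ∀ v, B v qj = B v 1 * qj) : B 1 1 = 0 := by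
  have hij := hB qi qj
  rw [apply_eq_apply_one_one_mul_mul hB hi hj, apply_eq_apply_one_one_mul_mul hB hj hi,
    mul_assoc, mul_assoc, qi_mul_qj, qj_mul_qi, mul_neg, eq_neg_iff_add_eq_zero, ← two_smul ℝ, smul_eq_zero, mul_eq_zero]
    at hij
  simpa [qk_ne_zero] using hij

/-- If `F : U → ℍ` is `C²` on an open set `U ⊆ ℍ ≅ ℝ⁴` and satisfies the
quaternionic Cauchy–Riemann system
`∂F/∂v = (∂F/∂w)·i⁻¹ = (∂F/∂x)·j⁻¹ = (∂F/∂y)·k⁻¹` on `U` (partial derivatives being the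
directional derivatives along `1, i, j, k`), then `F` is harmonic in each of the variable pairs
`(v,w)`, `(w,x)`, `(x,y)` and `(v,y)`: the corresponding two-variable Laplacians vanish. -/
theorem quaternion_CR_implies_pairwise_harmonic (U : Set ℍ[ℝ]) (hU : IsOpen U)
    (F : ℍ[ℝ] → ℍ[ℝ]) (hF : ContDiffOn ℝ 2 F U)
    (hCR : ∀ z ∈ U,
      fderiv ℝ F z 1 = fderiv ℝ F z qi * qi⁻¹ ∧
      fderiv ℝ F z 1 = fderiv ℝ F z qj * qj⁻¹ ∧
      fderiv ℝ F z 1 = fderiv ℝ F z qk * qk⁻¹) :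
    ∀ z ∈ U,
      fderiv ℝ (fun w => fderiv ℝ F w 1) z 1 + fderiv ℝ (fun w => fderiv ℝ F w qi) z qi = 0 ∧
      fderiv ℝ (fun w => fderiv ℝ F w qi) z qi + fderiv ℝ (fun w => fderiv ℝ F w qj) z qj = 0 ∧
      fderiv ℝ (fun w => fderiv ℝ F w qj) z qj + fderiv ℝ (fun w => fderiv ℝ F w qk) z qk = 0 ∧
      fderiv ℝ (fun w => fderiv ℝ F w 1) z 1 + fderiv ℝ (fun w => fderiv ℝ F w qk) z qk = 0 := by
  intro z hz
  have hzU : U ∈ 𝓝 z := hU.mem_nhds hz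
  have hF2 : ContDiffAt ℝ 2 F z := hF.contDiffAt hzU
  have hdiff : DifferentiableAt ℝ (fderiv ℝ F) z :=
    (hF2.fderiv_right (m := 1) le_rfl).differentiableAt one_ne_zero
  have hsymm := hF2.isSymmSndFDerivAt (by simp)
  have hCR_snd : ∀ q : ℍ[ℝ], (∀ w ∈ U, fderiv ℝ F w 1 = fderiv ℝ F w q * q⁻¹) → q ≠ 0 →
      ∀ v, fderiv ℝ (fderiv ℝ F) z v q = fderiv ℝ (fderiv ℝ F) z v 1 * q := fun q hq hq0 =>
    fderiv_fderiv_apply_eq_mul_const hdiff <| mem_of_superset hzU fun w hw =>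
      ((eq_mul_inv_iff_mul_eq₀ hq0).1 (hq w hw)).symm
  have hi := hCR_snd qi (fun w hw => (hCR w hw).1) qi_ne_zero
  have hj := hCR_snd qj (fun w hw => (hCR w hw).2.1) qj_ne_zero
  have hk := hCR_snd qk (fun w hw => (hCR w hw).2.2) qk_ne_zero
  have h11 := apply_one_one_eq_zero_of_symm hsymm hi hj
  have hdiag : ∀ q, (∀ v, fderiv ℝ (fderiv ℝ F) z v q = fderiv ℝ (fderiv ℝ F) z v 1 * q) →
      fderiv ℝ (fderiv ℝ F) z q q = 0 := fun q hq => by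
    rw [apply_eq_apply_one_one_mul_mul hsymm hq hq, h11, zero_mul, zero_mul]
  simp only [fderiv_fderiv_apply hdiff, h11, hdiag _ hi, hdiag _ hj, hdiag _ hk, add_zero,
    and_self]
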